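/- arXiv:2203.12251 — 3 statements merged into one kernel-verified Lean document; each statement's English description precedes it below -/
import Mathlib

section
/- Let (X,T) be a TDS with metric d and μ a Borel probability measure on X (not necessarily invariant). Then for every ε > 0, the lower Brin–Katok ε-entropy satisfies h̲_μ^{BK}(T, ε) ≤ M_μ(T, d, ε/2), where M_μ(T,d,ε/2) is the Katok-type Bowen (Carathéodory–Pesin) ε-entropy of μ. -/
open MeasureTheory Filter Set Metric Topology ENNReal

variable {X : Type*} [MetricSpace X]

/-- The `n`-th Bowen metric `d_n(x,y) = max_{0 ≤ j ≤ n-1} d(T^j x, T^j y)`. -/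
noncomputable def bowenDist (T : X → X) (n : ℕ) (x y : X) : ℝ :=
  ⨆ j ∈ Finset.range n, dist (T^[j] x) (T^[j] y)

/-- The open Bowen ball of order `n` and radius `ε`. -/
def bowenBall (T : X → X) (n : ℕ) (x : X) (ε : ℝ) : Set X :=
  {y | bowenDist T n x y < ε}

/-- The closed Bowen ball of order `n` and radius `ε`. -/
def bowenClosedBall (T : X → X) (n : ℕ) (x : X) (ε : ℝ) : Set X :=
  {y | bowenDist T n x y ≤ ε}

/-- `F` is `(n,ε)`-separated. -/
def IsBowenSeparated (T : X → X) (n : ℕ) (ε : ℝ) (F : Set X) : Prop :=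
  ∀ x ∈ F, ∀ y ∈ F, x ≠ y → ε < bowenDist T n x y

/-- Maximal cardinality of an `(n,ε)`-separated subset of `Z`. -/
noncomputable def sepNum (T : X → X) (n : ℕ) (ε : ℝ) (Z : Set X) : ℕ :=
  sSup {k | ∃ F : Finset X, ↑F ⊆ Z ∧ IsBowenSeparated T n ε ↑F ∧ F.card = k}

/-- A finite Borel measurable partition of `X`. -/
def IsMeasPartition [MeasurableSpace X] (P : Finset (Set X)) : Prop :=
  (∀ A ∈ P, MeasurableSet A) ∧ (∀ A ∈ P, ∀ B ∈ P, A ≠ B → Disjoint A B) ∧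
    (⋃ A ∈ P, A) = Set.univ

/-- A finite open cover of `X`. -/
def IsOpenCover (U : Finset (Set X)) : Prop :=
  (∀ A ∈ U, IsOpen A) ∧ (⋃ A ∈ U, A) = Set.univ

/-- The `n`-th join `⋁_{j=0}^{n-1} T^{-j} P` of a finite family of sets. -/
noncomputable def joinPart (T : X → X) (P : Finset (Set X)) (n : ℕ) : Finset (Set X) := by
  classical
  exact (Fintype.piFinset (fun _ : Fin n => P)).image
    (fun f => ⋂ j : Fin n, T^[(j : ℕ)] ⁻¹' f j)

/-- Static entropy of a finite partition. -/
noncomputable def partEntropy [MeasurableSpace X] (μ : Measure X) (P : Finset (Set X)) : ℝ :=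
  ∑ A ∈ P, Real.negMulLog (μ A).toReal

/-- Kolmogorov–Sinai entropy of `T` w.r.t. the partition `P`. -/
noncomputable def ksEntropyPart [MeasurableSpace X] (T : X → X) (μ : Measure X)
    (P : Finset (Set X)) : ℝ :=
  limsup (fun n => partEntropy μ (joinPart T P n) / n) atTop

/-- Kolmogorov–Sinai entropy of `(X,T,μ)`. -/
noncomputable def ksEntropy [MeasurableSpace X] (T : X → X) (μ : Measure X) : ℝ≥0∞ :=
  ⨆ (P : Finset (Set X)) (_ : IsMeasPartition P), ENNReal.ofReal (ksEntropyPart T μ P)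

/-- `N_μ(V, c)`: the minimal cardinality of a subfamily of `V` whose union has
measure at least `c`. -/
noncomputable def coverNum [MeasurableSpace X] (μ : Measure X) (V : Finset (Set X)) (c : ℝ) : ℕ :=
  sInf {k | ∃ W : Finset (Set X), W ⊆ V ∧ W.card = k ∧ ENNReal.ofReal c ≤ μ (⋃ A ∈ W, A)}

/-- Shapira's entropy of the open cover `U` at level `δ`. -/
noncomputable def shapiraEnt [MeasurableSpace X] (T : X → X) (μ : Measure X)
    (U : Finset (Set X)) (δ : ℝ) : ℝ :=
  limsup (fun n => Real.log (coverNum μ (joinPart T U n) δ) / n) atTop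

/-- `R_μ^δ(T,n,ε)`: minimal number of Bowen `(n,ε)`-balls whose union has measure `> 1 - δ`. -/
noncomputable def katokCovNum [MeasurableSpace X] (T : X → X) (μ : Measure X) (n : ℕ)
    (ε δ : ℝ) : ℕ :=
  sInf {k | ∃ E : Finset X, E.card = k ∧
    1 - ENNReal.ofReal δ < μ (⋃ x ∈ E, bowenBall T n x ε)}

/-- Upper Katok `ε`-entropy at level `δ`. -/
noncomputable def katokUpperδ [MeasurableSpace X] (T : X → X) (μ : Measure X) (ε δ : ℝ) : ℝ≥0∞ :=
  limsup (fun n => ENNReal.ofReal (Real.log (katokCovNum T μ n ε δ)) / n) atTop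

/-- Lower Katok `ε`-entropy at level `δ`. -/
noncomputable def katokLowerδ [MeasurableSpace X] (T : X → X) (μ : Measure X) (ε δ : ℝ) : ℝ≥0∞ :=
  liminf (fun n => ENNReal.ofReal (Real.log (katokCovNum T μ n ε δ)) / n) atTop

/-- Upper Katok `ε`-entropy: the limit of `katokUpperδ` as `δ → 0`. -/
noncomputable def katokUpper [MeasurableSpace X] (T : X → X) (μ : Measure X) (ε : ℝ) : ℝ≥0∞ :=
  ⨆ δ ∈ Set.Ioo (0 : ℝ) 1, katokUpperδ T μ ε δ

/-- Lower Katok `ε`-entropy: the limit of `katokLowerδ` as `δ → 0`. -/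
noncomputable def katokLower [MeasurableSpace X] (T : X → X) (μ : Measure X) (ε : ℝ) : ℝ≥0∞ :=
  ⨆ δ ∈ Set.Ioo (0 : ℝ) 1, katokLowerδ T μ ε δ

/-- `-log μ(S)`, as an extended nonnegative real (`∞` when `μ S = 0`). -/
noncomputable def negLogMeas [MeasurableSpace X] (μ : Measure X) (S : Set X) : ℝ≥0∞ :=
  if μ S = 0 then ⊤ else ENNReal.ofReal (-Real.log (μ S).toReal)

/-- Upper Brin–Katok local `ε`-entropy of `μ`. -/
noncomputable def bkUpper [MeasurableSpace X] (T : X → X) (μ : Measure X) (ε : ℝ) : ℝ≥0∞ :=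
  ∫⁻ x, limsup (fun n => negLogMeas μ (bowenBall T n x ε) / n) atTop ∂μ

/-- Lower Brin–Katok local `ε`-entropy of `μ`. -/
noncomputable def bkLower [MeasurableSpace X] (T : X → X) (μ : Measure X) (ε : ℝ) : ℝ≥0∞ :=
  ∫⁻ x, liminf (fun n => negLogMeas μ (bowenBall T n x ε) / n) atTop ∂μ

/-- `∑ e^{-s n_i}` over a family of (center, order) pairs. -/
noncomputable def weightSum (s : ℝ) (I : Set (X × ℕ)) : ℝ≥0∞ :=
  ∑' p : I, ENNReal.ofReal (Real.exp (-(s * ((p : X × ℕ).2 : ℝ))))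

/-- Carathéodory–Pesin Bowen pre-measure `M(T,d,Z,s,N,ε)`. -/
noncomputable def bowenPre (T : X → X) (Z : Set X) (s : ℝ) (N : ℕ) (ε : ℝ) : ℝ≥0∞ :=
  ⨅ (I : Set (X × ℕ)) (_ : I.Countable ∧ (∀ p ∈ I, N ≤ p.2) ∧
      Z ⊆ ⋃ p ∈ I, bowenBall T p.2 p.1 ε), weightSum s I

/-- `M(T,d,Z,s,ε) = lim_{N→∞} M(T,d,Z,s,N,ε)`. -/
noncomputable def bowenCP (T : X → X) (Z : Set X) (s : ℝ) (ε : ℝ) : ℝ≥0∞ :=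
  ⨆ N, bowenPre T Z s N ε

/-- Bowen `ε`-entropy of the subset `Z`: the critical value of `s ↦ M(T,d,Z,s,ε)`. -/
noncomputable def bowenEnt (T : X → X) (Z : Set X) (ε : ℝ) : ℝ≥0∞ :=
  sInf {a : ℝ≥0∞ | ∃ s : ℝ, 0 ≤ s ∧ a = ENNReal.ofReal s ∧ bowenCP T Z s ε = 0}

/-- Packing pre-measure `P(T,d,Z,s,N,ε)`: supremum of `∑ e^{-n_i s}` over pairwise disjoint
families of closed Bowen balls with centers in `Z` and orders `≥ N`. -/
noncomputable def packPre (T : X → X) (Z : Set X) (s : ℝ) (N : ℕ) (ε : ℝ) : ℝ≥0∞ :=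
  ⨆ (I : Set (X × ℕ)) (_ : I.Countable ∧ (∀ p ∈ I, N ≤ p.2 ∧ p.1 ∈ Z) ∧
      I.PairwiseDisjoint (fun p => bowenClosedBall T p.2 p.1 ε)), weightSum s I

/-- `P(T,d,Z,s,ε) = lim_{N→∞} P(T,d,Z,s,N,ε)`. -/
noncomputable def packCP (T : X → X) (Z : Set X) (s : ℝ) (ε : ℝ) : ℝ≥0∞ :=
  ⨅ N, packPre T Z s N ε

/-- `𝒫(T,d,Z,s,ε) = inf {∑_i P(T,d,Z_i,s,ε) : Z ⊆ ⋃ Z_i}`. -/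
noncomputable def packOuter (T : X → X) (Z : Set X) (s : ℝ) (ε : ℝ) : ℝ≥0∞ :=
  ⨅ (Zs : ℕ → Set X) (_ : Z ⊆ ⋃ i, Zs i), ∑' i, packCP T (Zs i) s ε

/-- Packing `ε`-entropy of the subset `Z`: critical value of `s ↦ 𝒫(T,d,Z,s,ε)`. -/
noncomputable def packEnt (T : X → X) (Z : Set X) (ε : ℝ) : ℝ≥0∞ :=
  sInf {a : ℝ≥0∞ | ∃ s : ℝ, 0 ≤ s ∧ a = ENNReal.ofReal s ∧ packOuter T Z s ε = 0}

/-- Packing topological entropy of a subset: `lim_{ε → 0} h_top^P(T,Z,d,ε)`. -/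
noncomputable def packEntTotal (T : X → X) (Z : Set X) : ℝ≥0∞ :=
  ⨆ (ε : ℝ) (_ : 0 < ε), packEnt T Z ε

/-- Katok-type Bowen pre-measure `M^δ(T,d,μ,s,N,ε)` for a measure `μ`. -/
noncomputable def bowenPreMeas [MeasurableSpace X] (T : X → X) (μ : Measure X) (s : ℝ)
    (N : ℕ) (ε δ : ℝ) : ℝ≥0∞ :=
  ⨅ (I : Set (X × ℕ)) (_ : I.Countable ∧ (∀ p ∈ I, N ≤ p.2) ∧
      1 - ENNReal.ofReal δ < μ (⋃ p ∈ I, bowenBall T p.2 p.1 ε)), weightSum s I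

/-- The critical value `M^δ(T,d,μ,ε)`. -/
noncomputable def bowenEntMeasδ [MeasurableSpace X] (T : X → X) (μ : Measure X)
    (ε δ : ℝ) : ℝ≥0∞ :=
  sInf {a : ℝ≥0∞ | ∃ s : ℝ, 0 ≤ s ∧ a = ENNReal.ofReal s ∧
    (⨆ N, bowenPreMeas T μ s N ε δ) = 0}

/-- `M_μ(T,d,ε) = lim_{δ → 0} M^δ(T,d,μ,ε)`. -/
noncomputable def bowenEntMeas [MeasurableSpace X] (T : X → X) (μ : Measure X) (ε : ℝ) : ℝ≥0∞ :=
  ⨆ δ ∈ Set.Ioo (0 : ℝ) 1, bowenEntMeasδ T μ ε δ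

/-- `𝒫^δ(T,d,μ,s,ε) = inf {∑_i P(T,d,Z_i,s,ε) : μ(⋃ Z_i) > 1 - δ}`. -/
noncomputable def packOuterMeas [MeasurableSpace X] (T : X → X) (μ : Measure X) (s : ℝ)
    (ε δ : ℝ) : ℝ≥0∞ :=
  ⨅ (Zs : ℕ → Set X) (_ : 1 - ENNReal.ofReal δ < μ (⋃ i, Zs i)), ∑' i, packCP T (Zs i) s ε

/-- The critical value `𝒫^δ(T,d,μ,ε)`. -/
noncomputable def packEntMeasδ [MeasurableSpace X] (T : X → X) (μ : Measure X)
    (ε δ : ℝ) : ℝ≥0∞ :=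
  sInf {a : ℝ≥0∞ | ∃ s : ℝ, 0 ≤ s ∧ a = ENNReal.ofReal s ∧ packOuterMeas T μ s ε δ = 0}

/-- `𝒫_μ(T,d,ε) = lim_{δ → 0} 𝒫^δ(T,d,μ,ε)`. -/
noncomputable def packEntMeas [MeasurableSpace X] (T : X → X) (μ : Measure X) (ε : ℝ) : ℝ≥0∞ :=
  ⨆ δ ∈ Set.Ioo (0 : ℝ) 1, packEntMeasδ T μ ε δ

/-- The `n`-th empirical measure `(1/n) ∑_{j=0}^{n-1} δ_{T^j x}`. -/
noncomputable def empMeas [MeasurableSpace X] (T : X → X) (x : X) (n : ℕ) : Measure X :=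
  (n : ℝ≥0∞)⁻¹ • ∑ j ∈ Finset.range n, Measure.dirac (T^[j] x)

set_option linter.unusedSectionVars false in
lemma empMeas_finite [MeasurableSpace X] (T : X → X) (x : X) (n : ℕ) :
    IsFiniteMeasure (empMeas T x n) := by
  refine ⟨?_⟩
  have h : (∑ j ∈ Finset.range n, Measure.dirac (T^[j] x)) Set.univ = n := by
    rw [Measure.finset_sum_apply]
    simp
  rw [empMeas, Measure.smul_apply, smul_eq_mul, h]
  rcases eq_or_ne (n : ℝ≥0∞) 0 with h0 | h0
  · simp [h0]
  · rw [ENNReal.inv_mul_cancel h0 (by simp)]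
    exact ENNReal.one_lt_top

/-- The `n`-th empirical measure as a finite measure. -/
noncomputable def empFM [MeasurableSpace X] (T : X → X) (x : X) (n : ℕ) : FiniteMeasure X :=
  ⟨empMeas T x n, empMeas_finite T x n⟩

/-- The set of generic points of `μ`: points whose empirical measures converge weakly to `μ`. -/
def genPts [MeasurableSpace X] [OpensMeasurableSpace X] (T : X → X) (μ : Measure X) [IsFiniteMeasure μ] : Set X :=
  {x | Tendsto (fun n => empFM T x n) atTop (𝓝 (⟨μ, ‹_›⟩ : FiniteMeasure X))}

/-- `X_{n,F}`: points whose `n`-th empirical measure lies in `F`. -/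
def XnF [MeasurableSpace X] [OpensMeasurableSpace X] (T : X → X) (F : Set (FiniteMeasure X)) (n : ℕ) : Set X :=
  {x | empFM T x n ∈ F}

/-- Pfister–Sullivan `ε`-entropy of `μ`. -/
noncomputable def psEnt [MeasurableSpace X] [OpensMeasurableSpace X] (T : X → X) (μ : Measure X) [IsFiniteMeasure μ]
    (ε : ℝ) : ℝ≥0∞ :=
  ⨅ (F : Set (FiniteMeasure X)) (_ : F ∈ @nhds (FiniteMeasure X) _ (⟨μ, ‹_›⟩ : FiniteMeasure X)),
    limsup (fun n => ENNReal.ofReal (Real.log (sepNum T n ε (XnF T F n)) / n)) atTop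

/-- `limsup_{ε → 0⁺} f(ε)/log(1/ε)`. -/
noncomputable def mmUpper (f : ℝ → ℝ≥0∞) : ℝ≥0∞ :=
  limsup (fun ε : ℝ => f ε / ENNReal.ofReal (Real.log (1 / ε))) (𝓝[>] (0 : ℝ))

/-- `liminf_{ε → 0⁺} f(ε)/log(1/ε)`. -/
noncomputable def mmLower (f : ℝ → ℝ≥0∞) : ℝ≥0∞ :=
  liminf (fun ε : ℝ => f ε / ENNReal.ofReal (Real.log (1 / ε))) (𝓝[>] (0 : ℝ))

/-- Bowen upper metric mean dimension of a subset. -/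
noncomputable def mdimBUpper (T : X → X) (Z : Set X) : ℝ≥0∞ :=
  mmUpper (fun ε => bowenEnt T Z ε)

/-- Packing upper metric mean dimension of a subset. -/
noncomputable def mdimPUpper (T : X → X) (Z : Set X) : ℝ≥0∞ :=
  mmUpper (fun ε => packEnt T Z ε)

/-- Packing lower metric mean dimension of a subset. -/
noncomputable def mdimPLower (T : X → X) (Z : Set X) : ℝ≥0∞ :=
  mmLower (fun ε => packEnt T Z ε)

/-! Fix `s'` above `M_μ(T,d,ε/2)` and `δ ∈ (0,1)`. For every `N` there is a family of Bowen
balls `B_{n_i}(x_i, ε/2)`, `n_i ≥ N`, covering measure `> 1 - δ` with `∑ e^{-s n_i} < 1` for some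
`s < s'`. The light balls, those with `μ(B) < e^{-s' n_i}`, carry total measure at most
`e^{-(s'-s)N}`, so the heavy ones still cover almost `1 - δ`, and by continuity from above so do
the points lying in heavy balls for infinitely many `N`. Such a point `x` lies in a heavy
`B_n(y, ε/2) ⊆ B_n(x, ε)` for infinitely many `n`, hence `-log μ(B_n(x, ε)) / n ≤ s'` infinitely
often. Letting `δ → 0` gives this bound almost everywhere. -/

section BowenBall

variable {T : X → X} {n : ℕ} {x y : X} {r : ℝ}

lemma bowenDist_nonneg : 0 ≤ bowenDist T n x y :=
  Real.iSup_nonneg fun _ => Real.iSup_nonneg fun _ => dist_nonneg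

lemma bowenDist_le_of_forall {c : ℝ} (hc : 0 ≤ c) (h : ∀ j < n, dist (T^[j] x) (T^[j] y) ≤ c) :
    bowenDist T n x y ≤ c :=
  Real.iSup_le (fun j => Real.iSup_le (fun hj => h j (Finset.mem_range.mp hj)) hc) hc

lemma dist_iterate_le_bowenDist {j : ℕ} (hj : j < n) :
    dist (T^[j] x) (T^[j] y) ≤ bowenDist T n x y := by
  have hbdd : BddAbove (range fun j => ⨆ _ : j ∈ Finset.range n, dist (T^[j] x) (T^[j] y)) := by
    refine ⟨∑ i ∈ Finset.range n, dist (T^[i] x) (T^[i] y), ?_⟩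
    rintro _ ⟨i, rfl⟩
    exact Real.iSup_le (fun hi => Finset.single_le_sum
      (f := fun i => dist (T^[i] x) (T^[i] y)) (fun _ _ => dist_nonneg) hi)
      (Finset.sum_nonneg fun _ _ => dist_nonneg)
  have h := le_ciSup hbdd j
  rwa [ciSup_pos (Finset.mem_range.mpr hj)] at h

lemma bowenDist_triangle_left (z : X) :
    bowenDist T n y z ≤ bowenDist T n x y + bowenDist T n x z :=
  bowenDist_le_of_forall (add_nonneg bowenDist_nonneg bowenDist_nonneg) fun _ hj =>
    (dist_triangle_left _ _ _).trans
      (add_le_add (dist_iterate_le_bowenDist hj) (dist_iterate_le_bowenDist hj))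

lemma bowenBall_subset_of_mem (hy : y ∈ bowenBall T n x (r / 2)) :
    bowenBall T n x (r / 2) ⊆ bowenBall T n y r := fun z hz =>
  calc bowenDist T n y z ≤ bowenDist T n x y + bowenDist T n x z := bowenDist_triangle_left z
    _ < r / 2 + r / 2 := add_lt_add hy hz
    _ = r := add_halves r

lemma mem_bowenBall_iff :
    y ∈ bowenBall T n x r ↔ 0 < r ∧ ∀ j < n, dist (T^[j] x) (T^[j] y) < r := by
  refine ⟨fun hy => ⟨bowenDist_nonneg.trans_lt hy,
    fun j hj => (dist_iterate_le_bowenDist hj).trans_lt hy⟩, fun ⟨hr, hy⟩ => ?_⟩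
  rcases Nat.eq_zero_or_pos n with rfl | hn
  · exact (bowenDist_le_of_forall le_rfl fun j hj => absurd hj j.not_lt_zero).trans_lt hr
  · obtain ⟨j₀, hj₀, hmax⟩ := Finset.exists_max_image (Finset.range n)
      (fun j => dist (T^[j] x) (T^[j] y)) ⟨0, Finset.mem_range.mpr hn⟩
    exact (bowenDist_le_of_forall dist_nonneg fun j hj => hmax j (Finset.mem_range.mpr hj)).trans_lt
      (hy j₀ (Finset.mem_range.mp hj₀))

lemma isOpen_bowenBall (hT : Continuous T) : IsOpen (bowenBall T n x r) := by
  by_cases hr : 0 < r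
  · have h : bowenBall T n x r = ⋂ j ∈ Finset.range n, T^[j] ⁻¹' ball (T^[j] x) r := by
      ext y
      simp [mem_bowenBall_iff, hr, dist_comm]
    rw [h]
    exact isOpen_biInter_finset fun j _ => isOpen_ball.preimage (hT.iterate j)
  · have h : bowenBall T n x r = ∅ := by
      ext y
      simp [mem_bowenBall_iff, hr]
    exact h ▸ isOpen_empty

end BowenBall

section Measure

variable {α : Type*} [MeasurableSpace α] {μ : Measure α}

lemma le_measure_limsup_atTop_of_le_add [IsFiniteMeasure μ] {s : ℕ → Set α}
    (hs : ∀ n, MeasurableSet (s n)) {c : ℝ≥0∞} {a : ℕ → ℝ≥0∞} (ha : Tendsto a atTop (𝓝 0))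
    (h : ∀ n, c ≤ μ (s n) + a n) : c ≤ μ (limsup s atTop) := by
  have hanti : Antitone fun m => ⋃ n ≥ m, s n := fun m m' hm =>
    biUnion_mono (fun n hn => le_trans hm hn) fun _ _ => le_rfl
  have htail : ∀ m, MeasurableSet (⋃ n ≥ m, s n) := fun m =>
    MeasurableSet.biUnion (to_countable _) fun n _ => hs n
  simp only [limsup_eq_iInf_iSup_of_nat, iInf_eq_iInter, iSup_eq_iUnion]
  rw [hanti.measure_iInter (fun m => (htail m).nullMeasurableSet) ⟨0, measure_ne_top μ _⟩]
  refine le_iInf fun m => ge_of_tendsto (by simpa using ha.const_add (μ (⋃ n ≥ m, s n))) ?_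
  filter_upwards [eventually_ge_atTop m] with n hn
  exact (h n).trans (add_le_add_left (measure_mono (subset_biUnion_of_mem hn)) _)

lemma ae_of_forall_exists_measurableSet [IsProbabilityMeasure μ] {P : α → Prop}
    (h : ∀ δ ∈ Ioo (0 : ℝ) 1, ∃ G, MeasurableSet G ∧ 1 - ENNReal.ofReal δ ≤ μ G ∧ ∀ x ∈ G, P x) :
    ∀ᵐ x ∂μ, P x := by
  refine ae_iff.mpr (le_antisymm (ENNReal.le_of_forall_pos_le_add fun η hη _ => ?_) bot_le)
  set δ : ℝ := min η (1 / 2)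
  obtain ⟨G, hGm, hG, hP⟩ := h δ ⟨by positivity, by norm_num [δ]⟩
  calc μ {x | ¬P x} ≤ μ Gᶜ := measure_mono fun x hx hxG => hx (hP x hxG)
    _ = 1 - μ G := prob_compl_eq_one_sub hGm
    _ ≤ ENNReal.ofReal δ := tsub_le_iff_tsub_le.mp hG
    _ ≤ 0 + η := by
      rw [zero_add, ← ENNReal.ofReal_coe_nnreal]
      exact ENNReal.ofReal_le_ofReal (min_le_left _ _)

lemma negLogMeas_div_le_of_exp_le [IsFiniteMeasure μ] {S : Set α} {n : ℕ} {s : ℝ} (hn : n ≠ 0)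
    (hs : 0 ≤ s) (h : ENNReal.ofReal (Real.exp (-(s * n))) ≤ μ S) :
    negLogMeas μ S / n ≤ ENNReal.ofReal s := by
  have hpos : μ S ≠ 0 := ((ENNReal.ofReal_pos.mpr (Real.exp_pos _)).trans_le h).ne'
  have hlog : -Real.log (μ S).toReal ≤ s * n := by
    have := Real.log_le_log (Real.exp_pos _)
      ((ENNReal.ofReal_le_iff_le_toReal (measure_ne_top μ S)).mp h)
    rw [Real.log_exp] at this
    linarith
  rw [negLogMeas, if_neg hpos, ENNReal.div_le_iff (by simpa using hn) (ENNReal.natCast_ne_top n),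
    ← ENNReal.ofReal_natCast, ← ENNReal.ofReal_mul hs]
  exact ENNReal.ofReal_le_ofReal hlog

lemma measure_biUnion_light_le (B : α × ℕ → Set α) {I : Set (α × ℕ)} (hI : I.Countable)
    {N : ℕ} (hN : ∀ p ∈ I, N ≤ p.2) {s s' : ℝ} (hss' : s ≤ s') :
    μ (⋃ p ∈ {p ∈ I | μ (B p) < ENNReal.ofReal (Real.exp (-(s' * p.2)))}, B p)
      ≤ ENNReal.ofReal (Real.exp (-((s' - s) * N))) * weightSum s I := by
  set L := {p ∈ I | μ (B p) < ENNReal.ofReal (Real.exp (-(s' * p.2)))}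
  calc μ (⋃ p ∈ L, B p) ≤ ∑' p : L, μ (B p) := measure_biUnion_le μ (hI.mono (sep_subset _ _)) B
    _ ≤ ∑' p : L, ENNReal.ofReal (Real.exp (-((s' - s) * N)))
          * ENNReal.ofReal (Real.exp (-(s * (p : α × ℕ).2))) := by
        refine ENNReal.tsum_le_tsum fun p => p.2.2.le.trans ?_
        rw [← ENNReal.ofReal_mul (Real.exp_pos _).le, ← Real.exp_add]
        refine ENNReal.ofReal_le_ofReal (Real.exp_le_exp.mpr ?_)
        have hNp : (N : ℝ) ≤ (p : α × ℕ).2 := Nat.cast_le.mpr (hN _ p.2.1)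
        nlinarith [mul_le_mul_of_nonneg_left hNp (sub_nonneg.mpr hss')]
    _ ≤ ∑' p : I, ENNReal.ofReal (Real.exp (-((s' - s) * N)))
          * ENNReal.ofReal (Real.exp (-(s * (p : α × ℕ).2))) :=
        ENNReal.tsum_mono_subtype (fun p : α × ℕ => ENNReal.ofReal (Real.exp (-((s' - s) * N)))
          * ENNReal.ofReal (Real.exp (-(s * p.2)))) (sep_subset _ _)
    _ = _ := ENNReal.tsum_mul_left

end Measure

section Entropy

variable [MeasurableSpace X] {μ : Measure X} {T : X → X}

lemma exists_bowenCovers_of_bowenEntMeas_lt {r s' δ : ℝ}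
    (h : bowenEntMeas T μ r < ENNReal.ofReal s') (hδ : δ ∈ Ioo (0 : ℝ) 1) :
    ∃ s < s', ∀ N : ℕ, ∃ I : Set (X × ℕ), I.Countable ∧ (∀ p ∈ I, N ≤ p.2) ∧
      1 - ENNReal.ofReal δ < μ (⋃ p ∈ I, bowenBall T p.2 p.1 r) ∧ weightSum s I < 1 := by
  have hδ' : bowenEntMeasδ T μ r δ < ENNReal.ofReal s' := (le_biSup _ hδ).trans_lt h
  obtain ⟨_, ⟨s, hs, rfl, hzero⟩, hlt⟩ := sInf_lt_iff.mp hδ'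
  refine ⟨s, (ENNReal.ofReal_lt_ofReal_iff_of_nonneg hs).mp hlt, fun N => ?_⟩
  have hN : bowenPreMeas T μ s N r δ < 1 := by
    rw [ENNReal.iSup_eq_zero.mp hzero N]
    exact one_pos
  simp only [bowenPreMeas, iInf_lt_iff] at hN
  obtain ⟨I, ⟨hI, hIN, hcov⟩, hw⟩ := hN
  exact ⟨I, hI, hIN, hcov, hw⟩

lemma exists_measurableSet_liminf_negLogMeas_le [BorelSpace X] [IsProbabilityMeasure μ]
    (hT : Continuous T) {ε s' δ : ℝ} (h : bowenEntMeas T μ (ε / 2) < ENNReal.ofReal s')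
    (hδ : δ ∈ Ioo (0 : ℝ) 1) :
    ∃ G, MeasurableSet G ∧ 1 - ENNReal.ofReal δ ≤ μ G ∧
      ∀ x ∈ G,
        liminf (fun n => negLogMeas μ (bowenBall T n x ε) / n) atTop ≤ ENNReal.ofReal s' := by
  obtain ⟨s, hss', hcov⟩ := exists_bowenCovers_of_bowenEntMeas_lt h hδ
  choose I hI hIN hIcov hIw using hcov
  have hs' : 0 ≤ s' := (ENNReal.ofReal_pos.mp (bot_le.trans_lt h)).le
  set B : X × ℕ → Set X := fun p => bowenBall T p.2 p.1 (ε / 2)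
  set heavy : X × ℕ → Prop := fun p => ENNReal.ofReal (Real.exp (-(s' * p.2))) ≤ μ (B p)
  set U : ℕ → Set X := fun N => ⋃ p ∈ {p ∈ I N | heavy p}, B p
  set err : ℕ → ℝ≥0∞ := fun N => ENNReal.ofReal (Real.exp (-((s' - s) * N)))
  have hU : ∀ N, MeasurableSet (U N) := fun N =>
    MeasurableSet.biUnion ((hI N).mono (sep_subset _ _)) fun _ _ =>
      (isOpen_bowenBall hT).measurableSet
  have hU_large : ∀ N, 1 - ENNReal.ofReal δ ≤ μ (U N) + err N := fun N =>
    calc 1 - ENNReal.ofReal δ ≤ μ (⋃ p ∈ I N, B p) := (hIcov N).le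
      _ = μ (U N ∪ ⋃ p ∈ {p ∈ I N | ¬heavy p}, B p) := by
        rw [← biUnion_union, ← sep_or]
        simp only [or_not, and_true, ofPred_mem_eq]
      _ ≤ μ (U N) + μ (⋃ p ∈ {p ∈ I N | ¬heavy p}, B p) := measure_union_le _ _
      _ ≤ μ (U N) + err N * weightSum s (I N) := by
        gcongr
        simpa only [heavy, not_le] using measure_biUnion_light_le B (hI N) (hIN N) hss'.le
      _ ≤ μ (U N) + err N := by gcongr; exact mul_le_of_le_one_right' (hIw N).le
  have herr : Tendsto err atTop (𝓝 0) := by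
    simpa using ENNReal.tendsto_ofReal (Real.tendsto_exp_atBot.comp (tendsto_neg_atTop_atBot.comp
      (tendsto_natCast_atTop_atTop.const_mul_atTop (sub_pos.mpr hss'))))
  refine ⟨limsup U atTop, MeasurableSet.measurableSet_limsup hU,
    le_measure_limsup_atTop_of_le_add hU herr hU_large,
    fun x hx => liminf_le_of_frequently_le' (frequently_atTop.mpr fun M => ?_)⟩
  obtain ⟨N, hMN, hxU⟩ := frequently_atTop.mp (mem_limsup_iff_frequently_mem.mp hx) (max M 1)
  obtain ⟨p, ⟨hpI, hp⟩, hxp⟩ := mem_iUnion₂.mp hxU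
  have hn : max M 1 ≤ p.2 := hMN.trans (hIN N p hpI)
  exact ⟨p.2, (le_max_left _ _).trans hn, negLogMeas_div_le_of_exp_le (by omega) hs'
    (hp.trans (measure_mono (bowenBall_subset_of_mem hxp)))⟩

end Entropy

theorem stmt_8_general {X : Type*} [MetricSpace X] [MeasurableSpace X] [BorelSpace X]
    (T : X → X) (hT : Continuous T) (μ : Measure X) [IsProbabilityMeasure μ]
    (ε : ℝ) :
    bkLower T μ ε ≤ bowenEntMeas T μ (ε / 2) := by
  refine le_of_forall_gt_imp_ge_of_dense fun b hb => ?_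
  rcases eq_or_ne b ⊤ with rfl | hb_top
  · exact le_top
  rw [← ENNReal.ofReal_toReal hb_top] at hb ⊢
  have hae : ∀ᵐ x ∂μ, liminf (fun n => negLogMeas μ (bowenBall T n x ε) / n) atTop
      ≤ ENNReal.ofReal b.toReal := ae_of_forall_exists_measurableSet fun _ hδ =>
    exists_measurableSet_liminf_negLogMeas_le hT hb hδ
  calc bkLower T μ ε ≤ ∫⁻ _, ENNReal.ofReal b.toReal ∂μ := lintegral_mono_ae hae
    _ = ENNReal.ofReal b.toReal := by simp

/-- `h̲_μ^{BK}(T, ε) ≤ M_μ(T, d, ε/2)` for any Borel probability measure `μ`. -/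
theorem stmt_8 {X : Type*} [MetricSpace X] [CompactSpace X] [MeasurableSpace X] [BorelSpace X]
    (T : X → X) (hT : Continuous T) (μ : Measure X) [IsProbabilityMeasure μ]
    (ε : ℝ) (hε : 0 < ε) :
    bkLower T μ ε ≤ bowenEntMeas T μ (ε / 2) :=
  stmt_8_general T hT μ ε
end

section
/- Let (X,T) be a TDS with metric d and μ a Borel probability measure. Then for every ε > 0, M_μ(T,d,ε/2) ≤ inf{h_top^B(T, Z, d, ε/2) : Z ⊂ X Borel, μ(Z) = 1}, where h_top^B is the Bowen ε-entropy of a subset. -/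
open MeasureTheory Filter Set Metric Topology ENNReal

variable {X : Type*} [MetricSpace X]

section BowenEntropyComparison

variable [MeasurableSpace X] {T : X → X} {μ : Measure X} {Z : Set X} {ε δ : ℝ}

theorem bowenPreMeas_le_bowenPre (hZ : 1 - ENNReal.ofReal δ < μ Z) (s : ℝ) (N : ℕ) :
    bowenPreMeas T μ s N ε δ ≤ bowenPre T Z s N ε :=
  le_iInf₂ fun I ⟨hI, hN, hcover⟩ =>
    iInf₂_le I ⟨hI, hN, hZ.trans_le (measure_mono hcover)⟩

theorem bowenEntMeasδ_le_bowenEnt (hZ : 1 - ENNReal.ofReal δ < μ Z) :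
    bowenEntMeasδ T μ ε δ ≤ bowenEnt T Z ε := by
  refine sInf_le_sInf ?_
  rintro _ ⟨s, hs, rfl, hnull⟩
  refine ⟨s, hs, rfl, le_antisymm ?_ bot_le⟩
  calc (⨆ N, bowenPreMeas T μ s N ε δ) ≤ ⨆ N, bowenPre T Z s N ε :=
        iSup_mono fun N => bowenPreMeas_le_bowenPre hZ s N
    _ = 0 := hnull

end BowenEntropyComparison

theorem stmt_9_general {X : Type*} [MetricSpace X] [MeasurableSpace X]
    (T : X → X) (μ : Measure X) (ε : ℝ) :
    bowenEntMeas T μ (ε / 2) ≤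
      ⨅ (Z : Set X) (_ : MeasurableSet Z ∧ μ Z = 1), bowenEnt T Z (ε / 2) := by
  refine le_iInf₂ fun Z ⟨_, hZ⟩ => iSup₂_le fun δ ⟨hδ, _⟩ => bowenEntMeasδ_le_bowenEnt ?_
  rw [hZ]
  exact ENNReal.sub_lt_self one_ne_top one_ne_zero (ENNReal.ofReal_pos.2 hδ).ne'

/-- `M_μ(T,d,ε/2) ≤ inf {h_top^B(T,Z,d,ε/2) : Z Borel, μ(Z) = 1}`. -/
theorem stmt_9 {X : Type*} [MetricSpace X] [CompactSpace X] [MeasurableSpace X] [BorelSpace X]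
    (T : X → X) (hT : Continuous T) (μ : Measure X) [IsProbabilityMeasure μ]
    (ε : ℝ) (hε : 0 < ε) :
    bowenEntMeas T μ (ε / 2) ≤
      ⨅ (Z : Set X) (_ : MeasurableSet Z ∧ μ Z = 1), bowenEnt T Z (ε / 2) :=
  stmt_9_general T μ ε
end

section
/- Let Z ⊂ X, s ≥ 0, ε > 0, and for an ergodic measure μ let G_{μ,F}^N = {x ∈ G_μ : (1/n)∑_{j=0}^{n-1}δ_{T^j x} ∈ F for all n ≥ N}, where F is a weak*-neighborhood of μ. If 0 < s < t < h_top^P(T, G_{μ,F}^{N_0}, d, ε) for some N_0, then limsup_{n→∞} (1/n) log s_n(T, d, ε, X_{n,F}) ≥ s, where X_{n,F} = {x : (1/n)∑_{j=0}^{n-1}δ_{T^j x} ∈ F}. -/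
open MeasureTheory Filter Set Metric Topology ENNReal

variable {X : Type*} [MetricSpace X]

/-! If `s_n(T, d, ε, X_{n,F}) ≤ e^{sn}` for all large `n`, then in a disjoint family of closed
Bowen balls `B̄_{n_i}(x_i, ε)` centred in `G_{μ,F}^{N₀}`, the centres of a fixed order `n ≥ N₀`
form an `(n, ε)`-separated subset of `X_{n,F}`, so there are at most `e^{sn}` of them. Hence the
packing pre-measure with exponent `t > s` and orders `≥ N` is at most `∑_{n ≥ N} e^{(s-t)n}`,
which tends to `0` as `N → ∞`. So `h_top^P(T, G_{μ,F}^{N₀}, d, ε) ≤ t`. -/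

section BowenSeparated

variable {T : X → X} {n : ℕ} {ε : ℝ}

lemma bowenDist_le {x y : X} {c : ℝ} (hc : 0 ≤ c)
    (h : ∀ j < n, dist (T^[j] x) (T^[j] y) ≤ c) : bowenDist T n x y ≤ c :=
  Real.iSup_le (fun j => Real.iSup_le (fun hj => h j (Finset.mem_range.mp hj)) hc) hc

lemma mem_bowenClosedBall_self (x : X) (hε : 0 ≤ ε) : x ∈ bowenClosedBall T n x ε :=
  bowenDist_le hε fun j _ => by simpa using hε

lemma bowenDist_le_dist_orbit (x y : X) :
    bowenDist T n x y ≤ dist (fun j : Fin n => T^[j] x) (fun j : Fin n => T^[j] y) :=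
  bowenDist_le dist_nonneg fun j hj =>
    dist_le_pi_dist (fun i : Fin n => T^[i] x) (fun i : Fin n => T^[i] y) ⟨j, hj⟩

lemma exists_card_le_of_isBowenSeparated [CompactSpace X] (hT : Continuous T) (hε : 0 < ε) :
    ∃ K : ℕ, ∀ E : Finset X, IsBowenSeparated T n ε E → E.card ≤ K := by
  obtain ⟨δ, hδ, hδε⟩ := Metric.uniformContinuous_iff.mp
    (CompactSpace.uniformContinuous_of_continuous
      (continuous_pi fun j : Fin n => hT.iterate j)) ε hε
  obtain ⟨net, -, hnet, hcover⟩ :=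
    finite_cover_balls_of_compact (isCompact_univ (X := X)) (half_pos hδ)
  have : ∀ x : X, ∃ c ∈ hnet.toFinset, dist x c < δ / 2 := by
    intro x
    simpa using hcover (mem_univ x)
  choose f hf_mem hf_dist using this
  refine ⟨hnet.toFinset.card, fun E hE =>
    Finset.card_le_card_of_injOn f (fun x _ => hf_mem x) fun x hx y hy hxy => ?_⟩
  -- points sharing a point of the `δ/2`-net are `δ`-close, so their orbit segments are `ε`-close
  by_contra hne
  have hxy_close : dist x y < δ := calc
    dist x y ≤ dist x (f x) + dist y (f y) := by rw [hxy]; exact dist_triangle_right _ _ _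
    _ < δ := by linarith [hf_dist x, hf_dist y]
  exact (hE x hx y hy hne).not_ge ((bowenDist_le_dist_orbit x y).trans (hδε hxy_close).le)

lemma IsBowenSeparated.encard_le_sepNum [CompactSpace X] (hT : Continuous T) (hε : 0 < ε)
    {C Z : Set X} (hC : IsBowenSeparated T n ε C) (hCZ : C ⊆ Z) :
    C.encard ≤ sepNum T n ε Z := by
  obtain ⟨K, hK⟩ := exists_card_le_of_isBowenSeparated (n := n) hT hε
  have hfin : C.Finite := by
    by_contra hinf
    obtain ⟨E, hEC, hEcard⟩ := Set.Infinite.exists_subset_card_eq hinf (K + 1)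
    have := hK E fun x hx y hy => hC x (hEC hx) y (hEC hy)
    omega
  -- `sepNum` is an `sSup` in `ℕ`, which is junk (`0`) for unbounded sets
  have hbdd : BddAbove {k | ∃ E : Finset X, ↑E ⊆ Z ∧ IsBowenSeparated T n ε ↑E ∧ E.card = k} :=
    ⟨K, by rintro _ ⟨E, -, hE, rfl⟩; exact hK E hE⟩
  rw [hfin.encard_eq_coe_toFinset_card]
  exact_mod_cast le_csSup hbdd ⟨hfin.toFinset, by simpa using hCZ, by simpa using hC, rfl⟩

lemma isBowenSeparated_of_pairwiseDisjoint {I : Set (X × ℕ)} (hε : 0 ≤ ε)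
    (hI : I.PairwiseDisjoint fun p => bowenClosedBall T p.2 p.1 ε) (n : ℕ) :
    IsBowenSeparated T n ε {x | (x, n) ∈ I} := by
  intro x hx y hy hxy
  by_contra! hle
  exact Set.disjoint_left.mp (hI hx hy (by simpa using hxy)) hle (mem_bowenClosedBall_self y hε)

end BowenSeparated

lemma weightSum_eq_tsum_encard {α : Type*} (s : ℝ) (I : Set (α × ℕ)) :
    weightSum s I =
      ∑' n : ℕ, ({x | (x, n) ∈ I}.encard : ℝ≥0∞) * ENNReal.ofReal (Real.exp (-(s * n))) := by
  set g : ℕ → ℝ≥0∞ := fun n => ENNReal.ofReal (Real.exp (-(s * n)))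
  calc weightSum s I = ∑' p : α × ℕ, I.indicator (fun p => g p.2) p :=
      tsum_subtype I fun p : α × ℕ => g p.2
    _ = ∑' n, ∑' x, I.indicator (fun p => g p.2) (x, n) := by
      rw [ENNReal.tsum_prod', ENNReal.tsum_comm]
    _ = ∑' n, ∑' x : {x | (x, n) ∈ I}, g n := by
      congr 1; funext n
      rw [tsum_subtype {x | (x, n) ∈ I} fun _ => g n]
      rfl
    _ = _ := by simp_rw [ENNReal.tsum_set_const, g]

section Packing

variable {T : X → X} {ε : ℝ}

lemma packPre_le_geometric [CompactSpace X] (hT : Continuous T) (hε : 0 < ε)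
    {Z : Set X} {A : ℕ → Set X} {s t : ℝ} {N : ℕ}
    (hA : ∀ n ≥ N,
      Z ⊆ A n ∧ (sepNum T n ε (A n) : ℝ≥0∞) ≤ ENNReal.ofReal (Real.exp (s * n))) :
    packPre T Z t N ε ≤
      ENNReal.ofReal (Real.exp (s - t)) ^ N * (1 - ENNReal.ofReal (Real.exp (s - t)))⁻¹ := by
  set r := ENNReal.ofReal (Real.exp (s - t))
  refine iSup₂_le fun I hI => ?_
  obtain ⟨-, hIZ, hIdisj⟩ := hI
  set a : ℕ → ℝ≥0∞ := fun n =>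
    ({x | (x, n) ∈ I}.encard : ℝ≥0∞) * ENNReal.ofReal (Real.exp (-(t * n)))
  have ha_lt : ∀ n < N, a n = 0 := by
    intro n hn
    have : {x | (x, n) ∈ I} = ∅ := eq_empty_of_forall_notMem fun x hx => (hIZ _ hx).1.not_gt hn
    simp [a, this]
  have ha_ge : ∀ n ≥ N, a n ≤ r ^ n := by
    intro n hn
    have hcard : ({x | (x, n) ∈ I}.encard : ℝ≥0∞) ≤ sepNum T n ε (A n) := by
      exact_mod_cast (isBowenSeparated_of_pairwiseDisjoint hε.le hIdisj n).encard_le_sepNum hT hε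
        fun x hx => (hA n hn).1 (hIZ _ hx).2
    calc a n ≤ ENNReal.ofReal (Real.exp (s * n)) * ENNReal.ofReal (Real.exp (-(t * n))) :=
          mul_le_mul_left (hcard.trans (hA n hn).2) _
      _ = r ^ n := by
          rw [← ENNReal.ofReal_mul (Real.exp_nonneg _), ← Real.exp_add, ← ENNReal.ofReal_pow
            (Real.exp_nonneg _), ← Real.exp_nat_mul]
          ring_nf
  calc weightSum t I = ∑' n, a n := weightSum_eq_tsum_encard t I
    _ = ∑' k, a (k + N) := by
      rw [← (ENNReal.summable (f := fun k => a (k + N))).sum_add_tsum_nat_add',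
        Finset.sum_eq_zero fun n hn => ha_lt n (Finset.mem_range.mp hn), zero_add]
    _ ≤ ∑' k, r ^ N * r ^ k := ENNReal.tsum_le_tsum fun k => by
      rw [← pow_add, add_comm N]
      exact ha_ge _ (Nat.le_add_left N k)
    _ = r ^ N * (1 - r)⁻¹ := by rw [ENNReal.tsum_mul_left, ENNReal.tsum_geometric]

lemma packCP_eq_zero_of_eventually_sepNum_le [CompactSpace X] (hT : Continuous T) (hε : 0 < ε)
    {Z : Set X} {A : ℕ → Set X} {s t : ℝ} (hst : s < t)
    (hA : ∀ᶠ n in atTop,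
      Z ⊆ A n ∧ (sepNum T n ε (A n) : ℝ≥0∞) ≤ ENNReal.ofReal (Real.exp (s * n))) :
    packCP T Z t ε = 0 := by
  set r := ENNReal.ofReal (Real.exp (s - t))
  have hr : r < 1 := ENNReal.ofReal_lt_one.mpr (Real.exp_lt_one_iff.mpr (by linarith))
  have hlim : Tendsto (fun N => r ^ N * (1 - r)⁻¹) atTop (𝓝 0) := by
    simpa using ENNReal.Tendsto.mul_const (ENNReal.tendsto_pow_atTop_nhds_zero_of_lt_one hr)
      (Or.inr (ENNReal.inv_ne_top.mpr (tsub_pos_of_lt hr).ne'))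
  obtain ⟨N₁, hN₁⟩ := eventually_atTop.mp hA
  refine le_antisymm (ge_of_tendsto hlim ?_) bot_le
  filter_upwards [eventually_ge_atTop N₁] with N hN
  exact (iInf_le _ N).trans (packPre_le_geometric hT hε fun n hn => hN₁ n (hN.trans hn))

lemma packEnt_le_of_packCP_eq_zero {Z : Set X} {t : ℝ} (ht : 0 ≤ t) (h : packCP T Z t ε = 0) :
    packEnt T Z ε ≤ ENNReal.ofReal t := by
  refine sInf_le ⟨t, ht, rfl, le_antisymm ?_ bot_le⟩
  calc packOuter T Z t ε ≤ ∑' _ : ℕ, packCP T Z t ε :=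
        iInf₂_le (fun _ => Z) (subset_iUnion (fun _ : ℕ => Z) 0)
    _ = 0 := by simp [h]

end Packing

lemma natCast_le_ofReal_exp_of_ofReal_log_div_lt {k n : ℕ} {s : ℝ} (hn : 0 < n)
    (h : ENNReal.ofReal (Real.log k / n) < ENNReal.ofReal s) :
    (k : ℝ≥0∞) ≤ ENNReal.ofReal (Real.exp (s * n)) := by
  have hlog : Real.log k < s * n := by
    have := (ENNReal.ofReal_lt_ofReal_iff'.mp h).1
    rwa [div_lt_iff₀ (by exact_mod_cast hn)] at this
  rcases Nat.eq_zero_or_pos k with rfl | hk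
  · simp
  · rw [← ENNReal.ofReal_natCast]
    exact ENNReal.ofReal_le_ofReal
      ((Real.log_le_iff_le_exp (by exact_mod_cast hk)).mp hlog.le)

theorem stmt_18_general {X : Type*} [MetricSpace X] [CompactSpace X] [MeasurableSpace X] [BorelSpace X]
    (T : X → X) (hT : Continuous T) (μ : Measure X) [IsProbabilityMeasure μ]
    (F : Set (FiniteMeasure X))
    (ε s t : ℝ) (hε : 0 < ε) (N₀ : ℕ) (hst : s < t)
    (ht : ENNReal.ofReal t <
      packEnt T {x ∈ genPts T μ | ∀ n ≥ N₀, empFM T x n ∈ F} ε) :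
    ENNReal.ofReal s ≤
      limsup (fun n => ENNReal.ofReal (Real.log (sepNum T n ε (XnF T F n)) / n)) atTop := by
  by_contra! hlt
  have hs : 0 < s := ENNReal.ofReal_pos.mp (pos_of_gt hlt)
  have hsep : ∀ᶠ n in atTop,
      {x ∈ genPts T μ | ∀ n ≥ N₀, empFM T x n ∈ F} ⊆ XnF T F n ∧
      (sepNum T n ε (XnF T F n) : ℝ≥0∞) ≤ ENNReal.ofReal (Real.exp (s * n)) := by
    filter_upwards [eventually_lt_of_limsup_lt hlt, eventually_ge_atTop (max N₀ 1)] with n hn hnN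
    exact ⟨fun x hx => hx.2 n (le_of_max_le_left hnN),
      natCast_le_ofReal_exp_of_ofReal_log_div_lt (le_of_max_le_right hnN) hn⟩
  exact ht.not_ge (packEnt_le_of_packCP_eq_zero (by linarith)
    (packCP_eq_zero_of_eventually_sepNum_le hT hε hst hsep))

/-- if `0 < s < t < h_top^P(T, G_{μ,F}^{N₀}, d, ε)` then
`limsup_n (1/n) log s_n(T,d,ε,X_{n,F}) ≥ s`. -/
theorem stmt_18 {X : Type*} [MetricSpace X] [CompactSpace X] [MeasurableSpace X] [BorelSpace X]
    (T : X → X) (hT : Continuous T) (μ : Measure X) [IsProbabilityMeasure μ]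
    (hμ : Ergodic T μ) (F : Set (FiniteMeasure X))
    (hF : F ∈ @nhds (FiniteMeasure X) _ ((⟨μ, inferInstance⟩ : FiniteMeasure X)))
    (ε s t : ℝ) (hε : 0 < ε) (N₀ : ℕ) (hs : 0 < s) (hst : s < t)
    (ht : ENNReal.ofReal t <
      packEnt T {x ∈ genPts T μ | ∀ n ≥ N₀, empFM T x n ∈ F} ε) :
    ENNReal.ofReal s ≤
      limsup (fun n => ENNReal.ofReal (Real.log (sepNum T n ε (XnF T F n)) / n)) atTop :=
  stmt_18_general T hT μ F ε s t hε N₀ hst ht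
end
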